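/- Let μ_t ∈ [0, √2), η := 2/√(2 + μ_t²), α₀ ∈ [0, 1), λ := α₀ + (1−α₀)η, r > 0, and c := rλ. Then η > 1, λ > 1, and c > 0; moreover, for every σ_v ∈ (σ₀(c), 1], setting μ_v := √(2(1 − σ_v²)), the derivative of the reduced validation loss with respect to α₀ is strictly negative: r(1−η) · E_Z[(S(c(μ_v + σ_v Z)) − 1)(μ_v + σ_v Z)] < 0. -/

import Mathlib

/-!
Since `S < 1`, the integrand at `s = 0` is the negative constant `(S(c√2) - 1)√2`, so `g(c, 0) > 0`
and `σ₀(c) ≥ 0`. Any `σᵥ ∈ (σ₀(c), 1]` therefore lies in `[0, 1]` outside the set defining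
`σ₀(c)`, which means `g(c, σᵥ) < 0`: the expectation is positive. Its prefactor `r(1 - η)` is
negative because `√(2 + μₜ²) < 2`.
-/

open MeasureTheory ProbabilityTheory

/-- The logistic sigmoid `S(t) = 1/(1 + exp(-t))`. -/
noncomputable def S (t : ℝ) : ℝ := 1 / (1 + Real.exp (-t))

/-- The standard Gaussian measure on `ℝ`. -/
noncomputable def γ : Measure ℝ := gaussianReal 0 1

/-- The validation mean `μᵥ(s) := √(2(1 - s²))`. -/
noncomputable def μv (s : ℝ) : ℝ := Real.sqrt (2 * (1 - s ^ 2))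

/-- `g(c, s) := -E_Z[(S(c(μᵥ(s) + s Z)) - 1)(μᵥ(s) + s Z)]` for a standard Gaussian `Z`. -/
noncomputable def g (c s : ℝ) : ℝ :=
  -∫ z, (S (c * (μv s + s * z)) - 1) * (μv s + s * z) ∂γ

/-- `σ₀(c) := sup { s ∈ [0,1] : g(c, s) ≥ 0 }`. -/
noncomputable def σ₀ (c : ℝ) : ℝ := sSup {s : ℝ | s ∈ Set.Icc (0 : ℝ) 1 ∧ 0 ≤ g c s}

lemma S_lt_one (t : ℝ) : S t < 1 := by
  rw [S, div_lt_one (by positivity)]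
  linarith [Real.exp_pos (-t)]

instance isProbabilityMeasure_γ : IsProbabilityMeasure γ := by
  unfold γ
  infer_instance

lemma g_zero (c : ℝ) : g c 0 = (1 - S (c * Real.sqrt 2)) * Real.sqrt 2 := by
  simp only [g, μv, ne_eq, OfNat.ofNat_ne_zero, not_false_eq_true, zero_pow, sub_zero, mul_one,
    zero_mul, add_zero, integral_const, probReal_univ, smul_eq_mul, one_mul]
  ring

lemma g_zero_pos (c : ℝ) : 0 < g c 0 := by
  rw [g_zero]
  exact mul_pos (by linarith [S_lt_one (c * Real.sqrt 2)]) (by positivity)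

lemma bddAbove_setOf_g_nonneg (c : ℝ) : BddAbove {s : ℝ | s ∈ Set.Icc (0 : ℝ) 1 ∧ 0 ≤ g c s} :=
  ⟨1, fun _ hs => hs.1.2⟩

lemma σ₀_nonneg (c : ℝ) : 0 ≤ σ₀ c :=
  le_csSup (bddAbove_setOf_g_nonneg c) ⟨Set.left_mem_Icc.mpr zero_le_one, (g_zero_pos c).le⟩

lemma g_neg_of_σ₀_lt {c s : ℝ} (hs : s ∈ Set.Ioc (σ₀ c) 1) : g c s < 0 := by
  by_contra! hg
  have hs_mem : s ∈ {s : ℝ | s ∈ Set.Icc (0 : ℝ) 1 ∧ 0 ≤ g c s} :=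
    ⟨⟨(σ₀_nonneg c).trans hs.1.le, hs.2⟩, hg⟩
  exact (le_csSup (bddAbove_setOf_g_nonneg c) hs_mem).not_gt hs.1

lemma one_lt_two_div_sqrt_two_add_sq {μ : ℝ} (hμ : μ ^ 2 < 2) : 1 < 2 / Real.sqrt (2 + μ ^ 2) := by
  rw [one_lt_div (by positivity), Real.sqrt_lt' two_pos]
  linarith

lemma one_lt_add_one_sub_mul {α η : ℝ} (hα : α < 1) (hη : 1 < η) : 1 < α + (1 - α) * η := by
  nlinarith

/-- Let `μₜ ∈ [0, √2)`, `η := 2/√(2 + μₜ²)`, `α₀ ∈ [0, 1)`, `λ := α₀ + (1-α₀)η`, `r > 0`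
and `c := rλ`.  Then `η > 1`, `λ > 1` and `c > 0`; moreover for every
`σᵥ ∈ (σ₀(c), 1]`, with `μᵥ = √(2(1 - σᵥ²))`, the derivative of the reduced validation
loss with respect to `α₀` is strictly negative:
`r(1-η) ⬝ E_Z[(S(c(μᵥ + σᵥ Z)) - 1)(μᵥ + σᵥ Z)] < 0`. -/
theorem stmt16 (μt : ℝ) (hμt : μt ∈ Set.Ico 0 (Real.sqrt 2))
    (η : ℝ) (hη : η = 2 / Real.sqrt (2 + μt ^ 2))
    (α₀ : ℝ) (hα₀ : α₀ ∈ Set.Ico (0 : ℝ) 1)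
    (l : ℝ) (hl : l = α₀ + (1 - α₀) * η)
    (r : ℝ) (hr : 0 < r) (c : ℝ) (hc : c = r * l) :
    1 < η ∧ 1 < l ∧ 0 < c ∧
      ∀ σv ∈ Set.Ioc (σ₀ c) 1,
        r * (1 - η) *
            ∫ z, (S (c * (μv σv + σv * z)) - 1) * (μv σv + σv * z) ∂γ < 0 := by
  have hμt_sq : μt ^ 2 < 2 := by
    rw [← Real.sq_sqrt zero_le_two]
    exact pow_lt_pow_left₀ hμt.2 hμt.1 two_ne_zero
  have hη1 : 1 < η := hη ▸ one_lt_two_div_sqrt_two_add_sq hμt_sq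
  have hl1 : 1 < l := hl ▸ one_lt_add_one_sub_mul hα₀.2 hη1
  have hc0 : 0 < c := hc ▸ mul_pos hr (one_pos.trans hl1)
  refine ⟨hη1, hl1, hc0, fun σv hσv => ?_⟩
  have hint : 0 < ∫ z, (S (c * (μv σv + σv * z)) - 1) * (μv σv + σv * z) ∂γ := by
    have hg := g_neg_of_σ₀_lt hσv
    rw [g] at hg
    linarith
  exact mul_neg_of_neg_of_pos (mul_neg_of_pos_of_neg hr (by linarith)) hint
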